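/- For every finite-index normal subgroup N of B₃ contained in PB₃, the intersection N° of all objects of the connected component of N in the groupoid GTSh is an isolated object of GTSh; i.e., every GT-shadow with target N° has kernel exactly N°. -/

import Mathlib

def braidRel : Set (FreeGroup (Fin 2)) :=
  {FreeGroup.of 0 * FreeGroup.of 1 * FreeGroup.of 0 *
    (FreeGroup.of 1 * FreeGroup.of 0 * FreeGroup.of 1)⁻¹}

/-- The Artin braid group on 3 strands. -/
abbrev B3 := PresentedGroup braidRel

def σ₁ : B3 := PresentedGroup.of 0
def σ₂ : B3 := PresentedGroup.of 1

/-- The standard projection B₃ → S₃. -/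
def ρ : B3 →* Equiv.Perm (Fin 3) :=
  PresentedGroup.toGroup (f := ![Equiv.swap 0 1, Equiv.swap 1 2]) (by
    intro r hr
    simp only [braidRel, Set.mem_singleton_iff] at hr
    subst hr
    simp only [map_mul, map_inv, FreeGroup.lift_apply_of]
    decide)

/-- The pure braid group on 3 strands. -/
def PB3 : Subgroup B3 := ρ.ker

def c : B3 := (σ₁ * σ₂ * σ₁) ^ 2

abbrev F2 := FreeGroup (Fin 2)
def xx : F2 := FreeGroup.of 0
def yy : F2 := FreeGroup.of 1

/-- The identification of F₂ with ⟨σ₁², σ₂²⟩ ≤ PB₃. -/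
def ι : F2 →* B3 := FreeGroup.lift ![σ₁ ^ 2, σ₂ ^ 2]

/-- The pair (m, f) satisfies the two hexagon relations modulo N. -/
def Hex (N : Subgroup B3) [N.Normal] (m : ℤ) (f : F2) : Prop :=
  QuotientGroup.mk' N (σ₁ ^ (2 * m + 1) * (ι f)⁻¹ * σ₂ ^ (2 * m + 1) * ι f) =
      QuotientGroup.mk' N ((ι f)⁻¹ * σ₁ * σ₂ * (σ₁ ^ 2) ^ (-m) * c ^ m) ∧
  QuotientGroup.mk' N ((ι f)⁻¹ * σ₂ ^ (2 * m + 1) * ι f * σ₁ ^ (2 * m + 1)) =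
      QuotientGroup.mk' N (σ₂ * σ₁ * (σ₂ ^ 2) ^ (-m) * c ^ m * ι f)

/-- N_ord: the lcm of the orders of x₁₂N, x₂₃N and cN in B₃/N. -/
noncomputable def Nord (N : Subgroup B3) [N.Normal] : ℕ :=
  Nat.lcm
    (Nat.lcm (orderOf (QuotientGroup.mk' N (σ₁ ^ 2)))
      (orderOf (QuotientGroup.mk' N (σ₂ ^ 2))))
    (orderOf (QuotientGroup.mk' N c))

/-- The endomorphism E_{m,f} of F₂. -/
def Emap (m : ℤ) (f : F2) : F2 →* F2 :=
  FreeGroup.lift ![xx ^ (2 * m + 1), f⁻¹ * yy ^ (2 * m + 1) * f]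

/-- [m, f] is a GT-shadow with target N and kernel (source) K. -/
def IsShadow (K N : Subgroup B3) [N.Normal] (m : ℤ) (f : F2) : Prop :=
  Hex N m f ∧
  (∃ g ∈ commutator F2, g⁻¹ * f ∈ N.comap ι) ∧
  IsUnit ((2 * m + 1 : ℤ) : ZMod (Nord N)) ∧
  ∃ T : B3 →* B3 ⧸ N,
    T σ₁ = QuotientGroup.mk' N (σ₁ ^ (2 * m + 1)) ∧
    T σ₂ = QuotientGroup.mk' N ((ι f)⁻¹ * σ₂ ^ (2 * m + 1) * ι f) ∧
    Function.Surjective T ∧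
    T.ker = K

/-- [m, f] is a GT-shadow with target N (with unspecified source). -/
def IsShadowTgt (N : Subgroup B3) [N.Normal] (m : ℤ) (f : F2) : Prop :=
  ∃ K : Subgroup B3, IsShadow K N m f

/-!
Let `N°` be the intersection of the component `S` of `N`. For `M ∈ S` the projection
`B₃/N° → B₃/M` turns a GT-shadow with target `N°` into one with target `M`, whose kernel is then
again in `S` and so contains `N°`. Hence a GT-shadow `T` with target `N°` maps `N°` into every
`M/N°`, i.e. into the trivial subgroup, so `N° ≤ ker T`. A kernel has the same index as the
target, and `S` consists of normal subgroups of one finite index; as `B₃` is finitely generated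
there are only finitely many of them, so `N°` has finite index and `ker T = N°`.
-/

theorem Relation.EqvGen.apply_eq {α β : Type*} {r : α → α → Prop} {p : α → β}
    (hp : ∀ a b, r a b → p a = p b) {a b : α} (h : Relation.EqvGen r a b) : p a = p b :=
  congrArg (Quot.lift p hp) (Quot.eqvGen_sound h)

namespace MonoidHom

variable {G P : Type*} [Group G] [Group P]

theorem index_ker_of_surjective {f : G →* P} (hf : Function.Surjective f) :
    f.ker.index = Nat.card P := by
  rw [Subgroup.index_ker, range_eq_top.mpr hf, Subgroup.card_top]

theorem finite_of_fg [Group.FG G] [Finite P] : Finite (G →* P) := by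
  obtain ⟨S, hS, φ, hφ⟩ := Group.fg_iff_exists_freeGroup_hom_surjective.mp ‹Group.FG G›
  have : Finite S := hS.to_subtype
  exact .of_injective (fun ψ : G →* P => FreeGroup.lift.symm (ψ.comp φ))
    fun ψ χ h => (cancel_right hφ).mp (FreeGroup.lift.symm.injective h)

end MonoidHom

namespace Subgroup

variable {G : Type*} [Group G]

theorem eq_of_le_of_index_eq {H K : Subgroup G} [H.FiniteIndex] (hle : H ≤ K)
    (hidx : K.index = H.index) : H = K :=
  eq_of_le_of_not_lt hle fun hlt => (index_strictAnti hlt).ne hidx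

theorem exists_monoidHom_perm_ker_eq_normalCore {H : Subgroup G} {n : ℕ} (hn : n ≠ 0)
    (hH : H.index = n) : ∃ φ : G →* Equiv.Perm (Fin n), φ.ker = H.normalCore := by
  have hcard : Nat.card (G ⧸ H) = n := by rw [← index_eq_card, hH]
  have : Finite (G ⧸ H) := Nat.finite_of_card_ne_zero (hcard ▸ hn)
  refine ⟨((Finite.equivFinOfCardEq hcard).permCongrHom : _ →* _).comp
    (MulAction.toPermHom G (G ⧸ H)), ?_⟩
  rw [MonoidHom.ker_mulEquiv_comp, normalCore_eq_ker]

theorem finite_setOf_normal_index_eq [Group.FG G] {n : ℕ} (hn : n ≠ 0) :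
    {M : Subgroup G | M.Normal ∧ M.index = n}.Finite := by
  have := MonoidHom.finite_of_fg (G := G) (P := Equiv.Perm (Fin n))
  refine (Set.finite_range fun φ : G →* Equiv.Perm (Fin n) => φ.ker).subset ?_
  rintro M ⟨hM, hidx⟩
  obtain ⟨φ, hφ⟩ := exists_monoidHom_perm_ker_eq_normalCore hn hidx
  exact ⟨φ, hφ.trans M.normalCore_eq_self⟩

theorem finiteIndex_sInf {S : Set (Subgroup G)} (hS : S.Finite)
    (h : ∀ M ∈ S, M.FiniteIndex) : (sInf S).FiniteIndex := by
  have : Finite S := hS.to_subtype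
  rw [sInf_eq_iInf']
  exact finiteIndex_iInf fun M => h M M.2

end Subgroup

instance : Group.FG B3 := Group.fg_of_surjective (PresentedGroup.mk_surjective braidRel)

theorem Nord_dvd_of_le {D M : Subgroup B3} [D.Normal] [M.Normal] (hDM : D ≤ M) :
    Nord M ∣ Nord D := by
  have key : ∀ x : B3, orderOf (QuotientGroup.mk' M x) ∣ orderOf (QuotientGroup.mk' D x) :=
    fun x => orderOf_map_dvd (QuotientGroup.map D M (MonoidHom.id B3) hDM) _
  exact lcm_dvd_lcm (lcm_dvd_lcm (key _) (key _)) (key _)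

def IsShadowHom (N : Subgroup B3) [N.Normal] (m : ℤ) (f : F2) (T : B3 →* B3 ⧸ N) : Prop :=
  Hex N m f ∧
  (∃ g ∈ commutator F2, g⁻¹ * f ∈ N.comap ι) ∧
  IsUnit ((2 * m + 1 : ℤ) : ZMod (Nord N)) ∧
  T σ₁ = QuotientGroup.mk' N (σ₁ ^ (2 * m + 1)) ∧
  T σ₂ = QuotientGroup.mk' N ((ι f)⁻¹ * σ₂ ^ (2 * m + 1) * ι f) ∧
  Function.Surjective T

theorem isShadow_iff {K N : Subgroup B3} [N.Normal] {m : ℤ} {f : F2} :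
    IsShadow K N m f ↔ ∃ T, IsShadowHom N m f T ∧ T.ker = K :=
  ⟨fun ⟨hex, hf, hu, T, h₁, h₂, hs, hk⟩ => ⟨T, ⟨hex, hf, hu, h₁, h₂, hs⟩, hk⟩,
    fun ⟨T, ⟨hex, hf, hu, h₁, h₂, hs⟩, hk⟩ => ⟨hex, hf, hu, T, h₁, h₂, hs, hk⟩⟩

theorem IsShadowHom.map {D M : Subgroup B3} [D.Normal] [M.Normal] {m : ℤ} {f : F2}
    {T : B3 →* B3 ⧸ D} (hT : IsShadowHom D m f T) (hDM : D ≤ M) :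
    IsShadowHom M m f ((QuotientGroup.map D M (MonoidHom.id B3) hDM).comp T) := by
  set φ := QuotientGroup.map D M (MonoidHom.id B3) hDM
  have hφ : ∀ x, φ (QuotientGroup.mk' D x) = QuotientGroup.mk' M x := fun _ => rfl
  obtain ⟨⟨hex₁, hex₂⟩, ⟨g, hg, hgf⟩, hu, h₁, h₂, hs⟩ := hT
  refine ⟨⟨?_, ?_⟩, ⟨g, hg, Subgroup.comap_mono hDM hgf⟩, ?_, ?_, ?_, ?_⟩
  · rw [← hφ, ← hφ, hex₁]
  · rw [← hφ, ← hφ, hex₂]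
  · simpa only [map_intCast] using hu.map (ZMod.castHom (Nord_dvd_of_le hDM) (ZMod (Nord M)))
  · rw [MonoidHom.comp_apply, h₁, hφ]
  · rw [MonoidHom.comp_apply, h₂, hφ]
  · exact (QuotientGroup.map_surjective_of_surjective D M (MonoidHom.id B3)
      QuotientGroup.mk_surjective hDM).comp hs

theorem IsShadow.normal {K N : Subgroup B3} [N.Normal] {m : ℤ} {f : F2}
    (h : IsShadow K N m f) : K.Normal := by
  obtain ⟨T, -, rfl⟩ := isShadow_iff.mp h
  infer_instance

theorem IsShadow.index_eq {K N : Subgroup B3} [N.Normal] {m : ℤ} {f : F2}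
    (h : IsShadow K N m f) : K.index = N.index := by
  obtain ⟨T, ⟨-, -, -, -, -, hs⟩, rfl⟩ := isShadow_iff.mp h
  rw [MonoidHom.index_ker_of_surjective hs, Subgroup.index_eq_card]

/-- There is a morphism `K → N` in the groupoid of GT-shadows. -/
def HasShadow (K N : Subgroup B3) : Prop :=
  ∃ h : N.Normal, ∃ (m : ℤ) (f : F2), @IsShadow K N h m f

def shadowComponent (N : Subgroup B3) : Set (Subgroup B3) :=
  {K | Relation.EqvGen HasShadow K N}

section shadowComponent

variable {N : Subgroup B3}

theorem normal_of_mem_shadowComponent [hN : N.Normal] {M : Subgroup B3}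
    (hM : M ∈ shadowComponent N) : M.Normal := by
  have : M.Normal = N.Normal :=
    hM.apply_eq fun _ _ ⟨hN, _, _, h⟩ => propext (iff_of_true h.normal hN)
  exact this ▸ hN

theorem index_eq_of_mem_shadowComponent {M : Subgroup B3} (hM : M ∈ shadowComponent N) :
    M.index = N.index :=
  hM.apply_eq fun _ _ ⟨_, _, _, h⟩ => h.index_eq

theorem finiteIndex_sInf_shadowComponent [N.Normal] [hN : N.FiniteIndex] :
    (sInf (shadowComponent N)).FiniteIndex := by
  have hfin : (shadowComponent N).Finite :=
    (Subgroup.finite_setOf_normal_index_eq hN.index_ne_zero).subset fun _ hM =>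
      ⟨normal_of_mem_shadowComponent hM, index_eq_of_mem_shadowComponent hM⟩
  exact Subgroup.finiteIndex_sInf hfin fun _ hM =>
    ⟨(index_eq_of_mem_shadowComponent hM).symm ▸ hN.index_ne_zero⟩

theorem le_ker_of_isShadowHom [N.Normal] {D : Subgroup B3} [D.Normal]
    (hD : D = sInf (shadowComponent N)) {m : ℤ} {f : F2} {T : B3 →* B3 ⧸ D}
    (hT : IsShadowHom D m f T) : D ≤ T.ker := by
  intro x hx
  obtain ⟨g, hg⟩ := QuotientGroup.mk'_surjective D (T x)
  suffices g ∈ D by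
    rwa [MonoidHom.mem_ker, ← hg, QuotientGroup.mk'_apply, QuotientGroup.eq_one_iff]
  rw [hD, Subgroup.mem_sInf]
  intro M hM
  have := normal_of_mem_shadowComponent hM
  have hDM : D ≤ M := hD.le.trans (sInf_le hM)
  have hker : ((QuotientGroup.map D M (MonoidHom.id B3) hDM).comp T).ker ∈ shadowComponent N :=
    .trans _ _ _ (.rel _ _ ⟨this, m, f, isShadow_iff.mpr ⟨_, hT.map hDM, rfl⟩⟩) hM
  have hx' := hD.le.trans (sInf_le hker) hx
  rw [MonoidHom.mem_ker, MonoidHom.comp_apply, ← hg] at hx'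
  exact (QuotientGroup.eq_one_iff g).mp hx'

end shadowComponent

theorem intersection_of_component_isolated_general (N D : Subgroup B3) [N.Normal] [D.Normal]
    (hNfin : N.FiniteIndex)
    (hD : D = sInf {K : Subgroup B3 |
      Relation.EqvGen
        (fun K' N' => ∃ h : N'.Normal, ∃ (m : ℤ) (f : F2), @IsShadow K' N' h m f)
        K N}) :
    ∀ (K : Subgroup B3) (m : ℤ) (f : F2), IsShadow K D m f → K = D := by
  intro K m f hK
  obtain ⟨T, hT, rfl⟩ := isShadow_iff.mp hK
  have hD' : D = sInf (shadowComponent N) := hD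
  have : D.FiniteIndex := hD' ▸ finiteIndex_sInf_shadowComponent (hN := hNfin)
  exact (Subgroup.eq_of_le_of_index_eq (le_ker_of_isShadowHom hD' hT) hK.index_eq).symm

/-- For every object N of GTSh, the intersection N° of all objects of the connected
component of N is an isolated object: every GT-shadow with target N° has kernel
exactly N°. -/
theorem intersection_of_component_isolated (N D : Subgroup B3) [N.Normal] [D.Normal]
    (hNfin : N.FiniteIndex) (hNle : N ≤ PB3)
    (hD : D = sInf {K : Subgroup B3 |
      Relation.EqvGen
        (fun K' N' => ∃ h : N'.Normal, ∃ (m : ℤ) (f : F2), @IsShadow K' N' h m f)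
        K N}) :
    ∀ (K : Subgroup B3) (m : ℤ) (f : F2), IsShadow K D m f → K = D :=
  intersection_of_component_isolated_general N D hNfin hD
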